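/- arXiv:2604.13486 — 2 statements merged into one kernel-verified Lean document; each statement's English description precedes it below -/
import Mathlib

section
/- Let X be a nonnegative real random variable on a probability space with finite second moment. Then Var(√X) ≤ (1/√2)·√(Var(X)). -/
open MeasureTheory ProbabilityTheory

/-!
Let `X'` be an independent copy of `X` and `Y = √X`, `Y' = √X'`. Then `Var Y = E(Y - Y')² / 2`,
and `(Y - Y')⁴ ≤ (Y - Y')² (Y + Y')² = (X - X')²`. Jensen's inequality therefore gives
`(2 Var Y)² ≤ E(Y - Y')⁴ ≤ E(X - X')² = 2 Var X`.
-/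

lemma MeasureTheory.Integrable.memLp_two_sqrt {Ω : Type*} [MeasurableSpace Ω] {μ : Measure Ω}
    {X : Ω → ℝ} (hX : Integrable X μ) (hX0 : 0 ≤ᵐ[μ] X) :
    MemLp (fun ω ↦ √(X ω)) 2 μ := by
  refine (memLp_two_iff_integrable_sq ?_).2 (hX.congr ?_)
  · exact Real.continuous_sqrt.comp_aestronglyMeasurable hX.aestronglyMeasurable
  · filter_upwards [hX0] with ω hω using (Real.sq_sqrt hω).symm

lemma Real.sqrt_sub_sqrt_pow_four_le {a b : ℝ} (ha : 0 ≤ a) (hb : 0 ≤ b) :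
    (√a - √b) ^ 4 ≤ (a - b) ^ 2 := by
  have hsum : (√a - √b) ^ 2 ≤ (√a + √b) ^ 2 := by
    nlinarith [Real.sqrt_nonneg a, Real.sqrt_nonneg b]
  calc (√a - √b) ^ 4 = (√a - √b) ^ 2 * (√a - √b) ^ 2 := by ring
    _ ≤ (√a - √b) ^ 2 * (√a + √b) ^ 2 := by gcongr
    _ = (a - b) ^ 2 := by rw [← mul_pow, mul_comm, ← sq_sub_sq, Real.sq_sqrt ha, Real.sq_sqrt hb]

namespace ProbabilityTheory

variable {Ω : Type*} [MeasurableSpace Ω] {μ : Measure Ω} [IsProbabilityMeasure μ]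

lemma sq_integral_le_integral_sq {f : Ω → ℝ} (hf : MemLp f 2 μ) :
    (∫ ω, f ω ∂μ) ^ 2 ≤ ∫ ω, f ω ^ 2 ∂μ := by
  have := variance_nonneg f μ
  rw [variance_eq_sub hf] at this
  simpa using this

lemma integral_prod_sub_sq {X : Ω → ℝ} (hX : MemLp X 2 μ) :
    ∫ p, (X p.1 - X p.2) ^ 2 ∂μ.prod μ = 2 * Var[X; μ] := by
  have hD : MemLp (fun p : Ω × Ω ↦ X p.1 - X p.2) 2 (μ.prod μ) :=
    (hX.comp_fst μ).sub (hX.comp_snd μ)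
  have hmean : ∫ p, (X p.1 - X p.2) ∂μ.prod μ = 0 := by
    rw [integral_sub ((hX.comp_fst μ).integrable one_le_two)
      ((hX.comp_snd μ).integrable one_le_two), integral_fun_fst, integral_fun_snd, sub_self]
  rw [← variance_of_integral_eq_zero hD.aestronglyMeasurable.aemeasurable hmean, two_mul]
  simpa [sub_eq_add_neg, variance_neg] using variance_add_prod hX hX.neg

lemma two_mul_sq_variance_le_of_pow_four_le {X Y : Ω → ℝ} (hX : MemLp X 2 μ) (hY : MemLp Y 2 μ)
    (hXY : ∀ ω ω', (Y ω - Y ω') ^ 4 ≤ (X ω - X ω') ^ 2) :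
    2 * Var[Y; μ] ^ 2 ≤ Var[X; μ] := by
  have hXX : Integrable (fun p : Ω × Ω ↦ (X p.1 - X p.2) ^ 2) (μ.prod μ) :=
    ((hX.comp_fst μ).sub (hX.comp_snd μ)).integrable_sq
  have hDY : MemLp (fun p : Ω × Ω ↦ Y p.1 - Y p.2) 2 (μ.prod μ) :=
    (hY.comp_fst μ).sub (hY.comp_snd μ)
  have hYY : MemLp (fun p : Ω × Ω ↦ (Y p.1 - Y p.2) ^ 2) 2 (μ.prod μ) := by
    refine (memLp_two_iff_integrable_sq (hDY.aestronglyMeasurable.pow 2)).2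
      (hXX.mono' (hDY.aestronglyMeasurable.pow 2 |>.pow 2) (ae_of_all _ fun p ↦ ?_))
    rw [Real.norm_eq_abs, Pi.pow_apply, abs_of_nonneg (by positivity), ← pow_mul]
    exact hXY p.1 p.2
  have key : (2 * Var[Y; μ]) ^ 2 ≤ 2 * Var[X; μ] := by
    rw [← integral_prod_sub_sq hY, ← integral_prod_sub_sq hX]
    calc (∫ p, (Y p.1 - Y p.2) ^ 2 ∂μ.prod μ) ^ 2
        ≤ ∫ p, ((Y p.1 - Y p.2) ^ 2) ^ 2 ∂μ.prod μ := sq_integral_le_integral_sq hYY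
      _ ≤ ∫ p, (X p.1 - X p.2) ^ 2 ∂μ.prod μ :=
        integral_mono hYY.integrable_sq hXX fun p ↦ by simpa [← pow_mul] using hXY p.1 p.2
  linarith

end ProbabilityTheory

/-- For a nonnegative real random variable `X` with finite second moment,
`Var(√X) ≤ (1/√2)·√(Var X)`. -/
theorem stmt_1 {Ω : Type*} [MeasurableSpace Ω] (μ : Measure Ω)
    [IsProbabilityMeasure μ] (X : Ω → ℝ)
    (hX2 : MeasureTheory.MemLp X 2 μ) (hX0 : ∀ ω, 0 ≤ X ω) :
    variance (fun ω => Real.sqrt (X ω)) μ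
      ≤ (Real.sqrt 2)⁻¹ * Real.sqrt (variance X μ) := by
  have hY := (hX2.integrable one_le_two).memLp_two_sqrt (ae_of_all _ hX0)
  have h := two_mul_sq_variance_le_of_pow_four_le hX2 hY
    fun ω ω' ↦ Real.sqrt_sub_sqrt_pow_four_le (hX0 ω) (hX0 ω')
  refine le_of_pow_le_pow_left₀ two_ne_zero (by positivity) ?_
  rw [mul_pow, inv_pow, Real.sq_sqrt zero_le_two, Real.sq_sqrt (variance_nonneg X μ)]
  linarith
end

section
/- Let N ≥ 1, d = 2^N, and let M ∈ M_d(ℂ) be Hermitian. Then 4·(Tr M)⁴ ≤ (1 + 3/d) · ( 3·Σ_{P∈𝒫_N} (Tr(M·P·M·P))² + Σ_{P∈𝒫_N} (Tr(M·P))⁴ ). -/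
open Matrix

noncomputable section

/-- The four single-qubit Pauli matrices `I₂, X, Y, Z`. -/
def pauli : Fin 4 → Matrix (Fin 2) (Fin 2) ℂ
  | 0 => 1
  | 1 => !![0, 1; 1, 0]
  | 2 => !![0, -Complex.I; Complex.I, 0]
  | 3 => !![1, 0; 0, -1]

/-- The `N`-qubit Pauli string `⊗_{r=1}^N P_{i r}` on `(ℂ²)^{⊗N} ≅ ℂ^{2^N}`. -/
def pauliString (N : ℕ) (i : Fin N → Fin 4) :
    Matrix (Fin N → Fin 2) (Fin N → Fin 2) ℂ :=
  fun x y => ∏ r, pauli (i r) (x r) (y r)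

lemma pauli_sum (a b c d : Fin 2) :
    ∑ k : Fin 4, pauli k a b * pauli k c d
      = if a = d ∧ b = c then 2 else 0 := by
  fin_cases a <;> fin_cases b <;> fin_cases c <;> fin_cases d <;>
    simp [pauli, Fin.sum_univ_four, Matrix.one_apply] <;> ring

lemma sum_pauliString (N : ℕ) (a b c d : Fin N → Fin 2) :
    ∑ i : Fin N → Fin 4, pauliString N i a b * pauliString N i c d
      = if a = d ∧ b = c then (2 : ℂ) ^ N else 0 := by
  have h1 : ∀ i : Fin N → Fin 4,
      pauliString N i a b * pauliString N i c d
        = ∏ r, (pauli (i r) (a r) (b r) * pauli (i r) (c r) (d r)) := by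
    intro i; rw [pauliString, pauliString, Finset.prod_mul_distrib]
  simp only [h1]
  rw [show (∑ i : Fin N → Fin 4, ∏ r, (pauli (i r) (a r) (b r) * pauli (i r) (c r) (d r)))
      = ∏ r, ∑ k : Fin 4, pauli k (a r) (b r) * pauli k (c r) (d r) by
    rw [Finset.prod_univ_sum]; rw [Fintype.piFinset_univ]]
  simp only [pauli_sum]
  by_cases h : a = d ∧ b = c
  · obtain ⟨h1, h2⟩ := h; subst h1; subst h2; simp
  · rw [if_neg h]
    have hex : ∃ r, ¬(a r = d r ∧ b r = c r) := by
      by_contra hc; push_neg at hc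
      exact h ⟨funext fun r => (hc r).1, funext fun r => (hc r).2⟩
    obtain ⟨r, hr⟩ := hex
    exact Finset.prod_eq_zero (Finset.mem_univ r) (if_neg hr)

lemma conj_sum (N : ℕ) (A : Matrix (Fin N → Fin 2) (Fin N → Fin 2) ℂ) :
    ∑ i : Fin N → Fin 4, pauliString N i * A * pauliString N i
      = ((2 : ℂ) ^ N * A.trace) • 1 := by
  ext x y
  simp only [Matrix.sum_apply, Matrix.mul_apply, Finset.sum_mul]
  rw [Finset.sum_comm]
  have step : ∀ w, ∑ i : Fin N → Fin 4, ∑ z, pauliString N i x z * A z w * pauliString N i w y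
      = ∑ z, A z w * (if x = y ∧ z = w then (2:ℂ)^N else 0) := by
    intro w
    rw [Finset.sum_comm]
    refine Finset.sum_congr rfl fun z _ => ?_
    rw [← sum_pauliString N x z w y, Finset.mul_sum]
    exact Finset.sum_congr rfl fun i _ => by ring
  simp only [step]
  by_cases hxy : x = y
  · subst hxy
    simp [Matrix.smul_apply, Matrix.one_apply, Matrix.trace, Matrix.diag,
      Finset.mul_sum, mul_comm]
  · simp [hxy, Matrix.one_apply]

lemma key (N : ℕ) (M : Matrix (Fin N → Fin 2) (Fin N → Fin 2) ℂ) :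
    ∑ i : Fin N → Fin 4, (M * pauliString N i * M * pauliString N i).trace
      = (2 : ℂ) ^ N * M.trace ^ 2 := by
  calc ∑ i : Fin N → Fin 4, (M * pauliString N i * M * pauliString N i).trace
      = (∑ i : Fin N → Fin 4, M * (pauliString N i * M * pauliString N i)).trace := by
        rw [Matrix.trace_sum]
        exact Finset.sum_congr rfl fun i _ => by rw [Matrix.mul_assoc, Matrix.mul_assoc, Matrix.mul_assoc]
    _ = (M * ∑ i : Fin N → Fin 4, pauliString N i * M * pauliString N i).trace := by
        rw [Finset.mul_sum]
    _ = (M * (((2 : ℂ) ^ N * M.trace) • 1)).trace := by rw [conj_sum]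
    _ = (2 : ℂ) ^ N * M.trace ^ 2 := by
        rw [Matrix.mul_smul, Matrix.mul_one, Matrix.trace_smul]
        simp [smul_eq_mul]; ring

lemma pauliString_zero (N : ℕ) : pauliString N (fun _ => 0) = 1 := by
  ext x y
  simp only [pauliString, pauli, Matrix.one_apply]
  rw [Finset.prod_boole]
  simp [funext_iff]

/-- For Hermitian `M` and `d = 2^N`,
`4(Tr M)⁴ ≤ (1 + 3/d)(3 Σ_P (Tr(MPMP))² + Σ_P (Tr(MP))⁴)` (all traces involved
are real, so real parts are taken). -/
theorem stmt_10 (N : ℕ) (hN : 1 ≤ N)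
    (M : Matrix (Fin N → Fin 2) (Fin N → Fin 2) ℂ) (hM : M.IsHermitian) :
    4 * (M.trace.re) ^ 4
      ≤ (1 + 3 / (2 ^ N : ℝ)) *
          (3 * ∑ i : Fin N → Fin 4,
                ((M * pauliString N i * M * pauliString N i).trace.re) ^ 2
            + ∑ i : Fin N → Fin 4, ((M * pauliString N i).trace.re) ^ 4) := by
  set t := M.trace.re with ht
  have him : M.trace.im = 0 := by
    have h1 : Mᴴ.trace = star M.trace := Matrix.trace_conjTranspose M
    rw [hM.eq] at h1
    have := Complex.conj_eq_iff_im.mp h1.symm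
    exact this
  have hc : M.trace = (t : ℂ) := Complex.ext rfl (by simp [him])
  set A := ∑ i : Fin N → Fin 4,
      ((M * pauliString N i * M * pauliString N i).trace.re) ^ 2 with hAdef
  set B := ∑ i : Fin N → Fin 4, ((M * pauliString N i).trace.re) ^ 4 with hBdef
  -- sum of traces is real and equals 2^N t²
  have hsum : ∑ i : Fin N → Fin 4,
      (M * pauliString N i * M * pauliString N i).trace.re = 2 ^ N * t ^ 2 := by
    have h := congrArg Complex.re (key N M)
    rw [Complex.re_sum] at h
    rw [h, hc, show ((2:ℂ)^N * (t:ℂ)^2) = ((2^N * t^2 : ℝ) : ℂ) by push_cast; ring,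
      Complex.ofReal_re]
  have hcard : (Finset.univ : Finset (Fin N → Fin 4)).card = 4 ^ N := by
    simp [Fintype.card_fun]
  have hA : t ^ 4 ≤ A := by
    have hcs := Finset.sum_mul_sq_le_sq_mul_sq Finset.univ
      (fun i : Fin N → Fin 4 =>
        (M * pauliString N i * M * pauliString N i).trace.re) (fun _ => (1 : ℝ))
    simp only [mul_one, one_pow, Finset.sum_const, hcard, nsmul_eq_mul] at hcs
    rw [hsum] at hcs
    have h4 : ((2 : ℝ) ^ N * t ^ 2) ^ 2 = 4 ^ N * t ^ 4 := by
      have h44 : (4:ℝ)^N = (2^N)^2 := by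
        rw [show (4:ℝ) = 2^2 by norm_num, ← pow_mul, ← pow_mul, Nat.mul_comm]
      rw [h44]; ring
    rw [h4] at hcs
    push_cast at hcs
    rw [← hAdef] at hcs
    have hpos : (0 : ℝ) < 4 ^ N := by positivity
    have h5 : t ^ 4 * 4 ^ N ≤ A * 4 ^ N := by linarith
    exact le_of_mul_le_mul_right h5 hpos
  have hB : t ^ 4 ≤ B := by
    have h0 : (M * pauliString N (fun _ => 0)).trace.re ^ 4 = t ^ 4 := by
      rw [pauliString_zero, Matrix.mul_one]
    rw [hBdef, ← h0]
    exact Finset.single_le_sum (f := fun i : Fin N → Fin 4 => (M * pauliString N i).trace.re ^ 4)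
      (fun i _ => by positivity) (Finset.mem_univ _)
  have h3 : (0 : ℝ) ≤ 3 / (2 ^ N : ℝ) := by positivity
  have ht4 : (0 : ℝ) ≤ t ^ 4 := by positivity
  nlinarith [mul_nonneg h3 (show (0:ℝ) ≤ 3 * A + B by nlinarith)]
end
end
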